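/- arXiv:1504.01357 — 5 statements merged into one kernel-verified Lean document; each statement's English description precedes it below -/
import Mathlib

section
/- For every 0 < α < 1 and every n ∈ ℕ₀ one has the strict inequality k^{α+1}(2n) < 2^α · (1 + (1-α)/(2(1+α)))^α · k^{α+1}(n). -/
/-!
Both Cesàro kernels are controlled by the two halves of Gautschi's inequality,
`(x + α - 1)^α ≤ Γ(x + α)/Γ(x) ≤ x^α` for `0 < α < 1`. The upper half is log-convexity of `Γ`
between `x` and `x + 1`; the lower half is the upper half with `α` replaced by `1 - α`, shifted by
the functional equation. This gives `k^{α+1}(2n) ≤ (2n+1)^α / Γ(α+1)` and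
`k^{α+1}(n) ≥ (n+α)^α / Γ(α+1)`, and for `n ≥ 1` the constant `((3+α)/(1+α))^α` beats the ratio
`((2n+1)/(n+α))^α` strictly; for `n = 0` it simply exceeds `k^{α+1}(0) = 1`.
-/

/-- The Cesàro kernel `k^α(n) = Γ(n+α)/(Γ(α)·Γ(n+1))`. -/
noncomputable def cesK (α : ℝ) (n : ℕ) : ℝ :=
  Real.Gamma ((n : ℝ) + α) / (Real.Gamma α * Real.Gamma ((n : ℝ) + 1))

open Real

namespace Real

theorem Gamma_add_le_Gamma_mul_rpow {x α : ℝ} (hx : 0 < x) (h0 : 0 < α) (h1 : α < 1) :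
    Gamma (x + α) ≤ Gamma x * x ^ α := by
  have hGx := Gamma_pos_of_pos hx
  calc Gamma (x + α) = Gamma ((1 - α) * x + α * (x + 1)) := by ring_nf
    _ ≤ Gamma x ^ (1 - α) * Gamma (x + 1) ^ α :=
      Gamma_mul_add_mul_le_rpow_Gamma_mul_rpow_Gamma hx (by linarith) (by linarith) h0
        (by ring)
    _ = Gamma x ^ (1 - α) * Gamma x ^ α * x ^ α := by
      rw [Gamma_add_one hx.ne', mul_comm x, mul_rpow hGx.le hx.le, mul_assoc]
    _ = Gamma x * x ^ α := by rw [← rpow_add hGx, sub_add_cancel, rpow_one]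

theorem Gamma_mul_rpow_le_Gamma_add {x α : ℝ} (hx : 1 < x + α) (h0 : 0 < α) (h1 : α < 1) :
    Gamma x * (x + α - 1) ^ α ≤ Gamma (x + α) := by
  set y := x + α - 1
  have hy : 0 < y := by linarith
  have hGy := Gamma_pos_of_pos hy
  have hGxα : Gamma (x + α) = Gamma y * y := by
    rw [show x + α = y + 1 by ring, Gamma_add_one hy.ne', mul_comm]
  have hGx : Gamma x ≤ Gamma y * y ^ (1 - α) := by
    simpa [y] using Gamma_add_le_Gamma_mul_rpow hy (α := 1 - α) (by linarith) (by linarith)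
  calc Gamma x * y ^ α ≤ Gamma y * y ^ (1 - α) * y ^ α := by gcongr
    _ = Gamma (x + α) := by rw [mul_assoc, ← rpow_add hy, sub_add_cancel, rpow_one, hGxα]

end Real

section CesaroKernel

variable {α : ℝ}

theorem cesK_zero (h0 : 0 < α) : cesK α 0 = 1 := by
  have := (Gamma_pos_of_pos h0).ne'
  simp [cesK, this]

theorem cesK_add_one_eq (m : ℕ) :
    cesK (α + 1) m = Gamma ((m + 1 : ℝ) + α) / Gamma (m + 1) / Gamma (α + 1) := by
  rw [cesK, add_comm α 1, ← add_assoc, div_div, mul_comm]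

theorem cesK_add_one_le (h0 : 0 < α) (h1 : α < 1) (m : ℕ) :
    cesK (α + 1) m ≤ ((m : ℝ) + 1) ^ α / Gamma (α + 1) := by
  have hm : (0 : ℝ) < m + 1 := by positivity
  rw [cesK_add_one_eq]
  gcongr
  rw [div_le_iff₀' (Gamma_pos_of_pos hm)]
  exact Gamma_add_le_Gamma_mul_rpow hm h0 h1

theorem rpow_div_le_cesK_add_one (h0 : 0 < α) (h1 : α < 1) (m : ℕ) :
    ((m : ℝ) + α) ^ α / Gamma (α + 1) ≤ cesK (α + 1) m := by
  have hm : (0 : ℝ) < m + 1 := by positivity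
  rw [cesK_add_one_eq]
  gcongr
  rw [le_div_iff₀' (Gamma_pos_of_pos hm)]
  simpa [add_sub_cancel_right, add_right_comm] using
    Gamma_mul_rpow_le_Gamma_add (x := (m : ℝ) + 1) (by linarith) h0 h1

end CesaroKernel

theorem stmt1 (α : ℝ) (h0 : 0 < α) (h1 : α < 1) (n : ℕ) :
    cesK (α + 1) (2 * n) <
      (2 : ℝ) ^ α * (1 + (1 - α) / (2 * (1 + α))) ^ α * cesK (α + 1) n := by
  have hC : (2 : ℝ) ^ α * (1 + (1 - α) / (2 * (1 + α))) ^ α = ((3 + α) / (1 + α)) ^ α := by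
    rw [← mul_rpow zero_le_two (by bound)]
    congr 1
    field_simp
    ring
  have hbase : 1 < (3 + α) / (1 + α) := by rw [one_lt_div (by linarith)]; linarith
  rw [hC]
  rcases Nat.eq_zero_or_pos n with rfl | hn
  · rw [mul_zero, cesK_zero (by linarith), mul_one]
    exact one_lt_rpow hbase h0
  have hΓ := Gamma_pos_of_pos (show 0 < α + 1 by linarith)
  have hn1 : (1 : ℝ) ≤ n := by exact_mod_cast hn
  have hratio : (2 * n + 1 : ℝ) < (3 + α) / (1 + α) * (n + α) := by
    rw [div_mul_eq_mul_div, lt_div_iff₀ (by linarith)]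
    nlinarith
  calc cesK (α + 1) (2 * n) ≤ ((2 * n : ℝ) + 1) ^ α / Gamma (α + 1) := by
        exact_mod_cast cesK_add_one_le h0 h1 (2 * n)
    _ < ((3 + α) / (1 + α)) ^ α * ((n + α) ^ α / Gamma (α + 1)) := by
        rw [← mul_div_assoc, ← mul_rpow (by positivity) (by positivity)]
        gcongr
    _ ≤ ((3 + α) / (1 + α)) ^ α * cesK (α + 1) n := by
        gcongr
        exact rpow_div_le_cesK_add_one h0 h1 n
end

section
/- Let X be a complex Banach space and let f : ℕ₀ → X be a finitely supported sequence. Then for all α, β > 0, W^{-α}(W^{-β} f) = W^{-(α+β)} f = W^{-β}(W^{-α} f). (Note that W^{-β} f is again finitely supported, so the composition is well defined.) -/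
/-!
The Cesàro kernel is `k^α(n) = (α)_n / n! = multichoose α n`, the coefficient sequence of
`(1 - z)^(-α)`; hence `k^(α+β)` is the Cauchy product of `k^α` and `k^β` (Chu–Vandermonde).
Since `W^{-α}` is correlation with `k^α`, composing two Weyl sums correlates with the Cauchy
product of the kernels, which for finitely supported `f` is a reindexing of finite sums.
-/

open Finset

/-- The Weyl sum of order `α`: `W^{-α}f(n) = ∑_{j=n}^∞ k^α(j-n)·f(j)`,
written as a sum over `j ≥ 0` of `k^α(j)·f(j+n)`.  For finitely supported `f`
this `finsum` is a genuine finite sum. -/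
noncomputable def weylSum {X : Type*} [AddCommMonoid X] [Module ℝ X] (α : ℝ) (f : ℕ → X) :
    ℕ → X :=
  fun n => ∑ᶠ j : ℕ, cesK α j • f (j + n)

theorem Real.Gamma_natCast_add {α : ℝ} (hα : ∀ k : ℕ, α ≠ -k) (n : ℕ) :
    Real.Gamma (n + α) = (ascPochhammer ℝ n).eval α * Real.Gamma α := by
  induction n with
  | zero => simp
  | succ n ih =>
    have hn : (n : ℝ) + α ≠ 0 := fun h => hα n (by linarith)
    rw [Nat.cast_succ, add_right_comm, Real.Gamma_add_one hn, ih, ascPochhammer_succ_eval]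
    ring

-- At a pole `α = -k` the junk value `Γ α = 0` makes `cesK α` vanish identically.
theorem cesK_eq_multichoose {α : ℝ} (hα : ∀ k : ℕ, α ≠ -k) (n : ℕ) :
    cesK α n = Ring.multichoose α n := by
  have hfac : (n.factorial : ℝ) ≠ 0 := by positivity
  rw [cesK, Real.Gamma_natCast_add hα, Real.Gamma_nat_eq_factorial,
    mul_comm (Real.Gamma α), mul_div_mul_right _ _ (Real.Gamma_ne_zero hα), div_eq_iff hfac,
    mul_comm, ← nsmul_eq_mul,
    Ring.factorial_nsmul_multichoose_eq_ascPochhammer, Polynomial.ascPochhammer_smeval_eq_eval]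

theorem Ring.multichoose_add {R : Type*} [CommRing R] [BinomialRing R] (r s : R) (m : ℕ) :
    Ring.multichoose (r + s) m =
      ∑ p ∈ antidiagonal m, Ring.multichoose r p.1 * Ring.multichoose s p.2 := by
  -- Chu–Vandermonde at `-r, -s`; the signs `(-1)^i (-1)^j = (-1)^m` cancel.
  have vandermonde := Ring.add_choose_eq (r := -r) (s := -s) m (Commute.all _ _)
  simp only [← neg_add, Ring.choose_neg'] at vandermonde
  calc Ring.multichoose (r + s) m
      = (m : ℤ).negOnePow • (m : ℤ).negOnePow • Ring.multichoose (r + s) m := by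
        rw [smul_smul, Int.units_mul_self, one_smul]
    _ = _ := by
        rw [vandermonde, smul_sum]
        refine sum_congr rfl fun p hp => ?_
        rw [smul_mul_smul_comm, ← Int.negOnePow_add, ← Nat.cast_add, mem_antidiagonal.mp hp,
          smul_smul, Int.units_mul_self, one_smul]

theorem cesK_add {α β : ℝ} (hα : ∀ k : ℕ, α ≠ -k) (hβ : ∀ k : ℕ, β ≠ -k)
    (hαβ : ∀ k : ℕ, α + β ≠ -k) (m : ℕ) :
    cesK (α + β) m = ∑ p ∈ antidiagonal m, cesK α p.1 * cesK β p.2 := by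
  simp only [cesK_eq_multichoose hα, cesK_eq_multichoose hβ, cesK_eq_multichoose hαβ,
    Ring.multichoose_add]

theorem finsum_smul_finsum_add_eq_finsum_sum_antidiagonal {R X : Type*} [Semiring R]
    [AddCommMonoid X] [Module R X] (a b : ℕ → R) {f : ℕ → X} (hf : f.support.Finite) (n : ℕ) :
    ∑ᶠ i, a i • ∑ᶠ j, b j • f (j + (i + n)) =
      ∑ᶠ m, (∑ p ∈ antidiagonal m, a p.1 * b p.2) • f (m + n) := by
  obtain ⟨N, hN⟩ : ∃ N, ∀ j, N ≤ j → f j = 0 := by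
    obtain ⟨B, hB⟩ := hf.bddAbove
    exact ⟨B + 1, fun j hj => Function.notMem_support.mp fun h => by have := hB h; omega⟩
  have finsum_eq_sum_range {g : ℕ → X} {K : ℕ} (hg : ∀ j, K ≤ j → g j = 0) :
      ∑ᶠ j, g j = ∑ j ∈ range K, g j :=
    finsum_eq_sum_of_support_subset g fun j hj => by
      by_contra h
      exact hj (hg j (by simpa using h))
  have inner (i : ℕ) : ∑ᶠ j, b j • f (j + (i + n)) = ∑ j ∈ range (N - i), b j • f (j + (i + n)) :=
    finsum_eq_sum_range fun j hj => by rw [hN _ (by omega), smul_zero]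
  calc ∑ᶠ i, a i • ∑ᶠ j, b j • f (j + (i + n))
      = ∑ i ∈ range N, ∑ j ∈ range (N - i), (a i * b j) • f (j + (i + n)) := by
        simp only [inner, smul_sum, smul_smul]
        exact finsum_eq_sum_range fun i hi => by simp [show N - i = 0 by omega]
    _ = ∑ m ∈ range N, ∑ k ∈ range (m + 1), (a k * b (m - k)) • f (m - k + (k + n)) :=
        (sum_range_diag_flip N fun i j => (a i * b j) • f (j + (i + n))).symm
    _ = ∑ m ∈ range N, (∑ p ∈ antidiagonal m, a p.1 * b p.2) • f (m + n) := by
        refine sum_congr rfl fun m _ => ?_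
        rw [Nat.sum_antidiagonal_eq_sum_range_succ (fun i j => a i * b j), sum_smul]
        refine sum_congr rfl fun k hk => ?_
        rw [show m - k + (k + n) = m + n by grind]
    _ = ∑ᶠ m, (∑ p ∈ antidiagonal m, a p.1 * b p.2) • f (m + n) :=
        (finsum_eq_sum_range fun m hm => by rw [hN _ (by omega), smul_zero]).symm

theorem weylSum_weylSum {X : Type*} [AddCommMonoid X] [Module ℝ X] {f : ℕ → X}
    (hf : f.support.Finite) {α β : ℝ} (hα : ∀ k : ℕ, α ≠ -k) (hβ : ∀ k : ℕ, β ≠ -k)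
    (hαβ : ∀ k : ℕ, α + β ≠ -k) :
    weylSum α (weylSum β f) = weylSum (α + β) f := by
  funext n
  simp only [weylSum, cesK_add hα hβ hαβ]
  exact finsum_smul_finsum_add_eq_finsum_sum_antidiagonal _ _ hf n

theorem stmt2_general {X : Type*} [NormedAddCommGroup X] [NormedSpace ℂ X]
    (f : ℕ → X) (hf : (Function.support f).Finite) (α β : ℝ) (hα : 0 < α) (hβ : 0 < β) :
    weylSum α (weylSum β f) = weylSum (α + β) f ∧
      weylSum (α + β) f = weylSum β (weylSum α f) := by
  have not_pole {γ : ℝ} (hγ : 0 < γ) (k : ℕ) : γ ≠ -k := by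
    have : (0 : ℝ) ≤ k := k.cast_nonneg
    intro h
    linarith
  refine ⟨weylSum_weylSum hf (not_pole hα) (not_pole hβ) (not_pole (add_pos hα hβ)), ?_⟩
  rw [add_comm]
  exact (weylSum_weylSum hf (not_pole hβ) (not_pole hα) (not_pole (add_pos hβ hα))).symm

theorem stmt2 {X : Type*} [NormedAddCommGroup X] [NormedSpace ℂ X] [CompleteSpace X]
    (f : ℕ → X) (hf : (Function.support f).Finite) (α β : ℝ) (hα : 0 < α) (hβ : 0 < β) :
    weylSum α (weylSum β f) = weylSum (α + β) f ∧
      weylSum (α + β) f = weylSum β (weylSum α f) :=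
  stmt2_general f hf α β hα hβ
end

section
/- Let α > 0 and λ ∈ ℂ with |λ| > 1, and define p_λ(n) = λ^{-(n+1)} for n ∈ ℕ₀. Then for every n ∈ ℕ₀ the series ∑_{j=n}^∞ k^α(j-n)·p_λ(j) converges absolutely and W^{-α} p_λ(n) = (1 − λ^{-1})^{-α} · p_λ(n), where the power is the principal complex power. Moreover, defining W^α p_λ(n) = (-1)^m Δ^m W^{-(m-α)} p_λ(n) with m = [α]+1 (all series involved converging absolutely), one has W^α p_λ(n) = (1 − λ^{-1})^α · p_λ(n) for all n ∈ ℕ₀. -/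
/-- The Weyl sum of order `β` for complex sequences, as a `tsum`:
`W^{-β}f(n) = ∑_{j=n}^∞ k^β(j-n)·f(j)`. -/
noncomputable def WtSum (β : ℝ) (f : ℕ → ℂ) (n : ℕ) : ℂ :=
  ∑' j : ℕ, (cesK β j : ℂ) * f (j + n)

/-- The forward difference operator `Δh(n) = h(n+1) - h(n)`. -/
def cdiff (f : ℕ → ℂ) : ℕ → ℂ := fun n => f (n + 1) - f n

lemma cesK_eq_choose {α : ℝ} (hα : 0 < α) (n : ℕ) :
    (cesK α n : ℂ) = Ring.choose ((α : ℂ) + n - 1) n := by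
  have hpoch : Complex.Gamma (α + n) / Complex.Gamma α = (ascPochhammer ℂ n).eval (α : ℂ) :=
    Complex.Gamma_add_nat_div_Gamma_eq _ fun k h => by
      have := congrArg Complex.re h
      simp only [Complex.ofReal_re, Complex.neg_re, Complex.natCast_re] at this
      linarith [(k.cast_nonneg : (0:ℝ) ≤ k)]
  have hmul := Ring.factorial_nsmul_multichoose_eq_ascPochhammer (α : ℂ) n
  rw [Polynomial.ascPochhammer_smeval_eq_eval, ← hpoch, nsmul_eq_mul] at hmul
  rw [← Ring.multichoose_eq, cesK, Real.Gamma_nat_eq_factorial, add_comm]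
  push_cast
  rw [← Complex.Gamma_ofReal, ← Complex.Gamma_ofReal]
  push_cast
  have hfact : (n.factorial : ℂ) ≠ 0 := by exact_mod_cast n.factorial_ne_zero
  rw [← div_div, ← hmul, mul_div_cancel_left₀ _ hfact]

lemma hasFPowerSeriesOnBall_one_sub_cpow_neg {α : ℝ} (hα : 0 < α) :
    HasFPowerSeriesOnBall (fun z => (1 - z) ^ (-(α : ℂ)))
      (.ofScalars ℂ fun n => (cesK α n : ℂ)) 0 1 := by
  simpa [cesK_eq_choose hα, Complex.cpow_neg] using
    Complex.one_div_one_sub_cpow_hasFPowerSeriesOnBall_zero (α : ℂ)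

lemma hasSum_cesK_mul_pow {α : ℝ} (hα : 0 < α) {z : ℂ} (hz : ‖z‖ < 1) :
    HasSum (fun j => (cesK α j : ℂ) * z ^ j) ((1 - z) ^ (-(α : ℂ))) := by
  simpa [FormalMultilinearSeries.ofScalars_apply_eq, mul_comm] using
    (hasFPowerSeriesOnBall_one_sub_cpow_neg hα).hasSum
      (by simpa [← ENNReal.ofReal_one, Metric.eball_ofReal] using hz)

lemma summable_norm_cesK_mul_pow {α : ℝ} (hα : 0 < α) {z : ℂ} (hz : ‖z‖ < 1) :
    Summable fun j => ‖(cesK α j : ℂ) * z ^ j‖ := by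
  simpa [FormalMultilinearSeries.ofScalars_apply_eq, mul_comm] using
    FormalMultilinearSeries.summable_norm_apply _
      (Metric.eball_subset_eball (hasFPowerSeriesOnBall_one_sub_cpow_neg hα).r_le
        (by simpa [← ENNReal.ofReal_one, Metric.eball_ofReal] using hz))

section Geometric

variable {β : ℝ} {z : ℂ} (c : ℂ)

lemma summable_norm_cesK_mul_geom (hβ : 0 < β) (hz : ‖z‖ < 1) (n : ℕ) :
    Summable fun j => ‖(cesK β j : ℂ) * (c * z ^ (j + n))‖ := by
  simpa [pow_add, mul_assoc, mul_left_comm, mul_comm] using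
    (summable_norm_cesK_mul_pow hβ hz).mul_right ‖c * z ^ n‖

lemma WtSum_geom (hβ : 0 < β) (hz : ‖z‖ < 1) (n : ℕ) :
    WtSum β (fun k => c * z ^ k) n = (1 - z) ^ (-(β : ℂ)) * (c * z ^ n) := by
  rw [WtSum, ← ((hasSum_cesK_mul_pow hβ hz).mul_right (c * z ^ n)).tsum_eq]
  congr 1 with j
  ring

lemma iterate_cdiff_geom (m : ℕ) :
    cdiff^[m] (fun k => c * z ^ k) = fun n => ((z - 1) ^ m * c) * z ^ n := by
  induction m generalizing c with
  | zero => simp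
  | succ m ih =>
    have hstep : cdiff (fun k => c * z ^ k) = fun k => ((z - 1) * c) * z ^ k := by
      funext k
      simp only [cdiff, pow_succ]
      ring
    rw [Function.iterate_succ_apply, hstep, ih]
    funext n
    ring

lemma neg_one_pow_mul_iterate_cdiff_WtSum_geom (hβ : 0 < β) (hz : ‖z‖ < 1) (m n : ℕ) :
    (-1) ^ m * cdiff^[m] (WtSum β fun k => c * z ^ k) n =
      (1 - z) ^ ((m : ℂ) - β) * (c * z ^ n) := by
  have hz1 : 1 - z ≠ 0 := sub_ne_zero.mpr fun h => by simp [← h] at hz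
  have hW : WtSum β (fun k => c * z ^ k) = fun k => ((1 - z) ^ (-(β : ℂ)) * c) * z ^ k :=
    funext fun k => by rw [WtSum_geom c hβ hz, mul_assoc]
  have hsign : (-1) ^ m * (z - 1) ^ m = (1 - z) ^ m := by rw [← mul_pow, neg_one_mul, neg_sub]
  rw [hW, iterate_cdiff_geom, sub_eq_add_neg (m : ℂ), Complex.cpow_add _ _ hz1,
    Complex.cpow_natCast, ← hsign]
  ring

end Geometric

theorem stmt5 (α : ℝ) (hα : 0 < α) (lam : ℂ) (hlam : 1 < ‖lam‖)
    (p : ℕ → ℂ) (hp : ∀ n : ℕ, p n = lam ^ (-((n : ℤ) + 1))) :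
    (∀ n : ℕ, Summable fun j : ℕ => ‖(cesK α j : ℂ) * p (j + n)‖) ∧
    (∀ n : ℕ, WtSum α p n = (1 - lam⁻¹) ^ (-(α : ℂ)) * p n) ∧
    (∀ n : ℕ, Summable fun j : ℕ => ‖(cesK ((⌊α⌋₊ : ℝ) + 1 - α) j : ℂ) * p (j + n)‖) ∧
    (∀ n : ℕ,
      (-1 : ℂ) ^ (⌊α⌋₊ + 1) * cdiff^[⌊α⌋₊ + 1] (WtSum ((⌊α⌋₊ : ℝ) + 1 - α) p) n =
        (1 - lam⁻¹) ^ (α : ℂ) * p n) := by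
  have hz : ‖lam⁻¹‖ < 1 := by rw [norm_inv]; exact inv_lt_one_of_one_lt₀ hlam
  have hβ : 0 < (⌊α⌋₊ : ℝ) + 1 - α := by linarith [Nat.lt_floor_add_one α]
  obtain rfl : p = fun k => lam⁻¹ * lam⁻¹ ^ k := by
    funext k
    rw [hp, zpow_neg, ← inv_zpow, ← Nat.cast_succ, zpow_natCast, pow_succ']
  refine ⟨summable_norm_cesK_mul_geom _ hα hz, WtSum_geom _ hα hz,
    summable_norm_cesK_mul_geom _ hβ hz, fun n => ?_⟩
  rw [neg_one_pow_mul_iterate_cdiff_WtSum_geom _ hβ hz]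
  push_cast
  ring_nf
end

section
/- For every 0 < α < 1 and all integers 1 ≤ j ≤ p: (∑_{n=0}^{j} + ∑_{n=p+1}^{j+p}) k^α(n)·k^{α+1}(j+p-n) ≤ (2^{α+1}·(1 + (1-α)/(2(1+α)))^α − 1)·k^{α+1}(j)·k^{α+1}(p). -/
open Finset

theorem one_add_div_mul_rpow_le {α x : ℝ} (hα0 : 0 ≤ α) (hα1 : α ≤ 1) (hx : 0 ≤ x) :
    (1 + α / (x + 1)) * x ^ α ≤ (x + 1) ^ α := by
  have hx1 : 0 < x + 1 := by positivity
  have hbern : (x / (x + 1)) ^ α ≤ 1 - α / (x + 1) := by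
    have := rpow_one_add_le_one_add_mul_self (s := -1 / (x + 1))
      (by rw [neg_div, neg_le_neg_iff, div_le_one hx1]; linarith) hα0 hα1
    have e1 : 1 + -1 / (x + 1) = x / (x + 1) := by field_simp; ring
    have e2 : 1 + α * (-1 / (x + 1)) = 1 - α / (x + 1) := by ring
    rwa [e1, e2] at this
  have hsplit : x ^ α = (x + 1) ^ α * (x / (x + 1)) ^ α := by
    rw [← Real.mul_rpow hx1.le (by positivity), mul_div_cancel₀ _ hx1.ne']
  have ht : 0 ≤ α / (x + 1) := by positivity
  calc (1 + α / (x + 1)) * x ^ α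
      ≤ (1 + α / (x + 1)) * ((x + 1) ^ α * (1 - α / (x + 1))) := by
        rw [hsplit]; gcongr
    _ = (x + 1) ^ α * (1 - (α / (x + 1)) ^ 2) := by ring
    _ ≤ (x + 1) ^ α := mul_le_of_le_one_right (by positivity) (by nlinarith)

theorem div_le_one_add_div_rpow {α : ℝ} (h0 : 0 < α) (h1 : α < 1) :
    (3 + α) / (3 + α ^ 2) ≤ (1 + (1 - α) / (2 * (1 + α))) ^ α := by
  have hb : 1 + (1 - α) / (2 * (1 + α)) = ((2 + 2 * α) / (3 + α))⁻¹ := by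
    rw [inv_div]; field_simp; ring
  have hy : 0 < (2 + 2 * α) / (3 + α) := by positivity
  have hbern : ((2 + 2 * α) / (3 + α)) ^ α ≤ (3 + α ^ 2) / (3 + α) := by
    have := rpow_one_add_le_one_add_mul_self (s := -(1 - α) / (3 + α))
      (by rw [neg_div, neg_le_neg_iff, div_le_one (by positivity)]; linarith) h0.le h1.le
    have e1 : 1 + -(1 - α) / (3 + α) = (2 + 2 * α) / (3 + α) := by field_simp; ring
    have e2 : 1 + α * (-(1 - α) / (3 + α)) = (3 + α ^ 2) / (3 + α) := by field_simp; ring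
    rwa [e1, e2] at this
  rw [hb, Real.inv_rpow hy.le, ← inv_div]
  exact inv_anti₀ (by positivity) hbern

theorem add_div_le_two_mul_mul_sub_one {α u v : ℝ} (h0 : 0 < α) (h1 : α < 1)
    (hu : 1 + α / 2 ≤ u) (hv : (3 + α) / (3 + α ^ 2) ≤ v) :
    u + α / (α + 1) ≤ 2 * u * v - 1 := by
  rw [div_le_iff₀ (by positivity)] at hv
  have hX : (1 + α / 2) * (3 + 2 * α - α ^ 2) ≤ u * (2 * v - 1) * (3 + α ^ 2) := by
    nlinarith [mul_le_mul_of_nonneg_left hv (by linarith : (0 : ℝ) ≤ u),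
      mul_le_mul_of_nonneg_right hu (by nlinarith : (0 : ℝ) ≤ 3 + 2 * α - α ^ 2)]
  have hpoly : (2 * α + 1) * (3 + α ^ 2) ≤ (1 + α / 2) * (3 + 2 * α - α ^ 2) * (α + 1) := by
    nlinarith [mul_nonneg (mul_nonneg h0.le (sub_nonneg.2 h1.le))
      (by positivity : (0 : ℝ) ≤ α ^ 2 + 6 * α + 1)]
  have : α / (α + 1) ≤ u * (2 * v - 1) - 1 := by
    rw [div_le_iff₀ (by positivity)]
    nlinarith [mul_le_mul_of_nonneg_right hX (by positivity : (0 : ℝ) ≤ α + 1)]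
  linarith

theorem two_rpow_add_div_le {α : ℝ} (h0 : 0 < α) (h1 : α < 1) :
    (2 : ℝ) ^ α + α / (α + 1) ≤
      (2 : ℝ) ^ (α + 1) * (1 + (1 - α) / (2 * (1 + α))) ^ α - 1 := by
  have h2 : 1 + α / 2 ≤ (2 : ℝ) ^ α := by
    simpa [one_add_one_eq_two] using one_add_div_mul_rpow_le h0.le h1.le zero_le_one
  rw [Real.rpow_add_one two_ne_zero, mul_comm _ (2 : ℝ)]
  exact add_div_le_two_mul_mul_sub_one h0 h1 h2 (div_le_one_add_div_rpow h0 h1)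

namespace cesK

variable {α : ℝ}

theorem pos (hα : 0 < α) (n : ℕ) : 0 < cesK α n := by
  unfold cesK
  have := Real.Gamma_pos_of_pos hα
  have := Real.Gamma_pos_of_pos (by positivity : (0 : ℝ) < n + α)
  have := Real.Gamma_pos_of_pos (by positivity : (0 : ℝ) < n + 1)
  positivity

theorem zero (hα : 0 < α) : cesK α 0 = 1 := by
  simp [cesK, (Real.Gamma_pos_of_pos hα).ne']

theorem succ (hα : 0 < α) (n : ℕ) :
    cesK α (n + 1) = cesK α n * ((n + α) / (n + 1)) := by
  have := (Real.Gamma_pos_of_pos hα).ne'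
  have := (Real.Gamma_pos_of_pos (by positivity : (0 : ℝ) < n + 1)).ne'
  simp only [cesK, Nat.cast_add_one, add_right_comm _ (1 : ℝ) α,
    Real.Gamma_add_one (by positivity : (n : ℝ) + α ≠ 0),
    Real.Gamma_add_one (by positivity : (n : ℝ) + 1 ≠ 0)]
  field_simp

theorem mul_add_one_eq_succ_mul_succ (hα : 0 < α) (n : ℕ) :
    α * cesK (α + 1) n = (n + 1) * cesK α (n + 1) := by
  have := (Real.Gamma_pos_of_pos hα).ne'
  have := (Real.Gamma_pos_of_pos (by positivity : (0 : ℝ) < n + 1)).ne'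
  simp only [cesK, Nat.cast_add_one, add_right_comm _ (1 : ℝ) α, ← add_assoc,
    Real.Gamma_add_one (by positivity : (n : ℝ) + α ≠ 0),
    Real.Gamma_add_one (by positivity : (n : ℝ) + 1 ≠ 0), Real.Gamma_add_one hα.ne']
  field_simp

theorem add_one_succ (hα : 0 < α) (n : ℕ) :
    cesK (α + 1) (n + 1) = cesK (α + 1) n + cesK α (n + 1) := by
  have h := mul_add_one_eq_succ_mul_succ hα n
  rw [succ (by positivity) n]
  field_simp
  linear_combination h

theorem sum_range_eq_add_one (hα : 0 < α) (n : ℕ) :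
    ∑ m ∈ range (n + 1), cesK α m = cesK (α + 1) n := by
  induction n with
  | zero => simp [zero hα, zero (by positivity : 0 < α + 1)]
  | succ n ih => rw [sum_range_succ, ih, add_one_succ hα]

theorem monotone_add_one (hα : 0 < α) : Monotone (cesK (α + 1)) :=
  monotone_nat_of_le_succ fun n => by
    rw [add_one_succ hα]; exact le_add_of_nonneg_right (pos hα _).le

theorem antitone (hα : 0 < α) (hα1 : α ≤ 1) : Antitone (cesK α) :=
  antitone_nat_of_succ_le fun n => by
    rw [succ hα]
    refine mul_le_of_le_one_right (pos hα n).le ?_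
    rw [div_le_one (by positivity)]
    linarith

theorem add_one_mul_rpow_le (hα0 : 0 < α) (hα1 : α ≤ 1) {m n : ℕ} (hmn : m ≤ n) :
    cesK (α + 1) n * (m : ℝ) ^ α ≤ cesK (α + 1) m * (n : ℝ) ^ α := by
  induction n, hmn using Nat.le_induction with
  | base => rfl
  | succ n _ ih =>
    have hstep : cesK (α + 1) (n + 1) = (1 + α / (n + 1)) * cesK (α + 1) n := by
      rw [succ (by positivity)]; field_simp; ring
    calc cesK (α + 1) (n + 1) * (m : ℝ) ^ α
        ≤ (1 + α / (n + 1)) * (cesK (α + 1) m * (n : ℝ) ^ α) := by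
          rw [hstep, mul_assoc]; gcongr
      _ ≤ cesK (α + 1) m * ((n + 1 : ℕ) : ℝ) ^ α := by
          rw [mul_left_comm, Nat.cast_add_one]
          exact mul_le_mul_of_nonneg_left (one_add_div_mul_rpow_le hα0.le hα1 n.cast_nonneg)
            (pos (by linarith) m).le

theorem add_one_add_le_two_rpow_mul (hα0 : 0 < α) (hα1 : α ≤ 1) {j p : ℕ} (hp : 0 < p)
    (hjp : j ≤ p) :
    cesK (α + 1) (j + p) ≤ 2 ^ α * cesK (α + 1) p := by
  have hp' : (0 : ℝ) < p := by exact_mod_cast hp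
  have hgrowth := add_one_mul_rpow_le hα0 hα1 (Nat.le_add_left p j)
  have hjp' : ((j + p : ℕ) : ℝ) ≤ 2 * p := by
    push_cast; linarith [(Nat.cast_le (α := ℝ)).2 hjp]
  have hdouble : ((j + p : ℕ) : ℝ) ^ α ≤ 2 ^ α * (p : ℝ) ^ α := by
    rw [← Real.mul_rpow zero_le_two hp'.le]; gcongr
  refine le_of_mul_le_mul_right ?_ (Real.rpow_pos_of_pos hp' α)
  calc cesK (α + 1) (j + p) * (p : ℝ) ^ α
      ≤ cesK (α + 1) p * ((j + p : ℕ) : ℝ) ^ α := hgrowth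
    _ ≤ cesK (α + 1) p * (2 ^ α * (p : ℝ) ^ α) := by gcongr; exact (pos (by linarith) p).le
    _ = 2 ^ α * cesK (α + 1) p * (p : ℝ) ^ α := by ring

theorem sum_range_mul_le (hα0 : 0 < α) (hα1 : α ≤ 1) {j p : ℕ} (hp : 0 < p)
    (hjp : j ≤ p) :
    ∑ n ∈ range (j + 1), cesK α n * cesK (α + 1) (j + p - n) ≤
      2 ^ α * (cesK (α + 1) j * cesK (α + 1) p) :=
  calc ∑ n ∈ range (j + 1), cesK α n * cesK (α + 1) (j + p - n)
      ≤ ∑ n ∈ range (j + 1), cesK α n * cesK (α + 1) (j + p) :=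
        sum_le_sum fun n _ => mul_le_mul_of_nonneg_left
          (monotone_add_one hα0 (Nat.sub_le _ _)) (pos hα0 n).le
    _ = cesK (α + 1) j * cesK (α + 1) (j + p) := by rw [← sum_mul, sum_range_eq_add_one hα0]
    _ ≤ cesK (α + 1) j * (2 ^ α * cesK (α + 1) p) :=
        mul_le_mul_of_nonneg_left (add_one_add_le_two_rpow_mul hα0 hα1 hp hjp)
          (pos (by linarith) j).le
    _ = 2 ^ α * (cesK (α + 1) j * cesK (α + 1) p) := by ring

theorem sum_Icc_mul_le (hα0 : 0 < α) (hα1 : α ≤ 1) {j p : ℕ} (hj : 0 < j) (hjp : j ≤ p) :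
    ∑ n ∈ Icc (p + 1) (j + p), cesK α n * cesK (α + 1) (j + p - n) ≤
      α / (α + 1) * (cesK (α + 1) j * cesK (α + 1) p) := by
  obtain ⟨q, rfl⟩ : ∃ q, j = q + 1 := Nat.exists_eq_add_one.2 hj
  have hreflect : ∑ n ∈ Icc (p + 1) (q + 1 + p), cesK (α + 1) (q + 1 + p - n) =
      ∑ m ∈ range (q + 1), cesK (α + 1) m := by
    rw [← Finset.Ico_add_one_right_eq_Icc, sum_Ico_reflect _ _ le_rfl, ← Nat.Ico_zero_eq_range]
    congr 2 <;> omega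
  have hfirst : cesK α (p + 1) = α / (p + 1) * cesK (α + 1) p := by
    rw [div_mul_eq_mul_div, eq_div_iff (by positivity), mul_add_one_eq_succ_mul_succ hα0,
      mul_comm]
  have hlast : cesK (α + 1 + 1) q = (q + 1) / (α + 1) * cesK (α + 1) (q + 1) := by
    rw [div_mul_eq_mul_div, eq_div_iff (by positivity), mul_comm,
      mul_add_one_eq_succ_mul_succ (by linarith)]
  have hqp : (q : ℝ) + 1 ≤ p + 1 := by exact_mod_cast Nat.le_succ_of_le hjp
  have hK : 0 ≤ cesK (α + 1) (q + 1) * cesK (α + 1) p :=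
    mul_nonneg (pos (by linarith) _).le (pos (by linarith) _).le
  calc ∑ n ∈ Icc (p + 1) (q + 1 + p), cesK α n * cesK (α + 1) (q + 1 + p - n)
      ≤ ∑ n ∈ Icc (p + 1) (q + 1 + p), cesK α (p + 1) * cesK (α + 1) (q + 1 + p - n) :=
        sum_le_sum fun n hn => mul_le_mul_of_nonneg_right
          (antitone hα0 hα1 (mem_Icc.1 hn).1) (pos (by linarith) _).le
    _ = cesK α (p + 1) * cesK (α + 1 + 1) q := by
        rw [← mul_sum, hreflect, sum_range_eq_add_one (by linarith)]
    _ = α / (α + 1) * (cesK (α + 1) (q + 1) * cesK (α + 1) p) * ((q + 1) / (p + 1)) := by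
        rw [hfirst, hlast]; ring
    _ ≤ α / (α + 1) * (cesK (α + 1) (q + 1) * cesK (α + 1) p) :=
        mul_le_of_le_one_right (by positivity) (div_le_one_of_le₀ hqp (by positivity))

end cesK

theorem stmt8 (α : ℝ) (h0 : 0 < α) (h1 : α < 1) (j p : ℕ) (hj : 1 ≤ j) (hjp : j ≤ p) :
    ((∑ n ∈ Finset.range (j + 1), cesK α n * cesK (α + 1) (j + p - n)) +
        ∑ n ∈ Finset.Icc (p + 1) (j + p), cesK α n * cesK (α + 1) (j + p - n)) ≤
      ((2 : ℝ) ^ (α + 1) * (1 + (1 - α) / (2 * (1 + α))) ^ α - 1) *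
        (cesK (α + 1) j * cesK (α + 1) p) := by
  have hK : 0 ≤ cesK (α + 1) j * cesK (α + 1) p :=
    mul_nonneg (cesK.pos (by linarith) _).le (cesK.pos (by linarith) _).le
  calc _ ≤ 2 ^ α * (cesK (α + 1) j * cesK (α + 1) p) +
        α / (α + 1) * (cesK (α + 1) j * cesK (α + 1) p) :=
        add_le_add (cesK.sum_range_mul_le h0 h1.le (by omega) hjp)
          (cesK.sum_Icc_mul_le h0 h1.le hj hjp)
    _ = (2 ^ α + α / (α + 1)) * (cesK (α + 1) j * cesK (α + 1) p) := by ring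
    _ ≤ _ := mul_le_mul_of_nonneg_right (two_rpow_add_div_le h0 h1) hK
end

section
/- Let α > 0 and β > 0. Then the sequence k^β belongs to the class ω_{α,loc} if and only if β ≥ α + 1. -/
/-- `φ` belongs to the class `ω_{α,loc}` with constant `c`. -/
def omegaLocC (α : ℝ) (φ : ℕ → ℝ) (c : ℝ) : Prop :=
  ∀ j p : ℕ, 1 ≤ j → j ≤ p →
    ((∑ n ∈ Finset.range (j + 1), cesK α n * φ (j + p - n)) +
        ∑ n ∈ Finset.Icc (p + 1) (j + p), cesK α n * φ (j + p - n)) ≤ c * (φ j * φ p)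

open Finset Real

theorem Finset.one_add_sum_le_prod_one_add {ι R : Type*} [CommSemiring R] [PartialOrder R]
    [IsOrderedRing R] (s : Finset ι) {f : ι → R} (hf : ∀ i ∈ s, 0 ≤ f i) :
    1 + ∑ i ∈ s, f i ≤ ∏ i ∈ s, (1 + f i) := by
  induction s using Finset.cons_induction with
  | empty => simp
  | cons a s _ ih =>
    have hfa := hf a (mem_cons_self a s)
    have hs := fun i hi => hf i (mem_cons_of_mem hi)
    rw [sum_cons, prod_cons]
    calc 1 + (f a + ∑ i ∈ s, f i) ≤ 1 + (f a + ∑ i ∈ s, f i) + f a * ∑ i ∈ s, f i :=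
          le_add_of_nonneg_right (mul_nonneg hfa (sum_nonneg hs))
      _ = (1 + f a) * (1 + ∑ i ∈ s, f i) := by ring
      _ ≤ (1 + f a) * ∏ i ∈ s, (1 + f i) :=
          mul_le_mul_of_nonneg_left (ih hs) (add_nonneg zero_le_one hfa)

section CesaroKernel

variable {γ : ℝ}

lemma cesK_pos (hγ : 0 < γ) (n : ℕ) : 0 < cesK γ n := by
  unfold cesK; positivity

lemma cesK_zero_s10 (hγ : 0 < γ) : cesK γ 0 = 1 := by
  simp [cesK, (Real.Gamma_pos_of_pos hγ).ne']

lemma cesK_succ (hγ : 0 < γ) (n : ℕ) : cesK γ (n + 1) = cesK γ n * ((γ + n) / (n + 1)) := by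
  have hΓ : Gamma (n + 1 + γ) = (n + γ) * Gamma (n + γ) := by
    rw [add_right_comm, Gamma_add_one (by positivity)]
  have hfact : Gamma (n + 1 + 1) = (n + 1) * Gamma (n + 1) := Gamma_add_one (by positivity)
  have := (Gamma_pos_of_pos hγ).ne'
  have : Gamma (n + 1) ≠ 0 := (Gamma_pos_of_pos (by positivity)).ne'
  simp only [cesK, Nat.cast_succ, hΓ, hfact]
  field_simp
  ring

lemma cesK_eq_prod (hγ : 0 < γ) (n : ℕ) : cesK γ n = ∏ i ∈ range n, (γ + i) / (i + 1) := by
  induction n with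
  | zero => simp [cesK_zero_s10 hγ]
  | succ n ih => rw [cesK_succ hγ, ih, prod_range_succ]

lemma mul_cesK_add_one (hγ : 0 < γ) (n : ℕ) : γ * cesK (γ + 1) n = (γ + n) * cesK γ n := by
  have := (Gamma_pos_of_pos hγ).ne'
  have : Gamma (n + 1) ≠ 0 := (Gamma_pos_of_pos (by positivity)).ne'
  simp only [cesK, ← add_assoc, Gamma_add_one hγ.ne',
    Gamma_add_one (by positivity : (n : ℝ) + γ ≠ 0)]
  field_simp
  ring

lemma sum_range_cesK (hγ : 0 < γ) (j : ℕ) : ∑ n ∈ range (j + 1), cesK γ n = cesK (γ + 1) j := by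
  induction j with
  | zero => simp [cesK_zero_s10 hγ, cesK_zero_s10 (by linarith : 0 < γ + 1)]
  | succ j ih =>
    rw [sum_range_succ, ih, cesK_succ hγ, cesK_succ (by linarith)]
    have h := mul_cesK_add_one hγ j
    field_simp
    linear_combination -h

lemma cesK_eq_mul_prod_Ico (hγ : 0 < γ) {p m : ℕ} (h : p ≤ m) :
    cesK γ m = cesK γ p * ∏ i ∈ Ico p m, (γ + i) / (i + 1) := by
  rw [cesK_eq_prod hγ, cesK_eq_prod hγ, prod_range_mul_prod_Ico _ h]

lemma cesK_le_cesK_of_le {δ : ℝ} (hγ : 0 < γ) (h : γ ≤ δ) (n : ℕ) : cesK γ n ≤ cesK δ n := by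
  rw [cesK_eq_prod hγ, cesK_eq_prod (hγ.trans_le h)]
  gcongr

lemma cesK_monotone (hγ : 1 ≤ γ) : Monotone (cesK γ) := by
  refine monotone_nat_of_le_succ fun n => ?_
  rw [cesK_succ (by linarith)]
  refine le_mul_of_one_le_right (cesK_pos (by linarith) n).le ?_
  rw [one_le_div (by positivity)]
  linarith

lemma cesK_le_exp_mul (hγ : 0 < γ) {p m : ℕ} (h₁ : p ≤ m) (h₂ : m ≤ 2 * p) :
    cesK γ m ≤ exp γ * cesK γ p := by
  have hp : (0 : ℝ) < p + 1 := by positivity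
  have hfactor : ∀ i ∈ Ico p m, (γ + i) / (i + 1) ≤ exp (γ / (p + 1)) := fun i hi => by
    have hi : (p : ℝ) ≤ i := by exact_mod_cast (mem_Ico.mp hi).1
    calc (γ + i) / (i + 1) ≤ γ / (p + 1) + 1 := by
          rw [div_add_one hp.ne', div_le_div_iff₀ (by positivity) hp]; nlinarith
      _ ≤ exp (γ / (p + 1)) := add_one_le_exp _
  have hcard : ((m - p : ℕ) : ℝ) * (γ / (p + 1)) ≤ γ := by
    rw [mul_div_assoc', div_le_iff₀ hp]
    have : ((m - p : ℕ) : ℝ) ≤ p + 1 := by norm_cast; omega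
    nlinarith
  have := (cesK_pos hγ p).le
  calc cesK γ m = cesK γ p * ∏ i ∈ Ico p m, (γ + i) / (i + 1) := cesK_eq_mul_prod_Ico hγ h₁
    _ ≤ cesK γ p * exp (γ / (p + 1)) ^ (m - p) := by
        gcongr
        rw [← Nat.card_Ico, ← prod_const]
        exact prod_le_prod (fun i _ => by positivity) hfactor
    _ ≤ exp γ * cesK γ p := by
        rw [← exp_nat_mul, mul_comm]
        gcongr

lemma min_one_mul_cesK_le (hγ : 0 < γ) {p m : ℕ} (h₁ : p ≤ m) (h₂ : m ≤ 2 * p) :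
    min 1 γ * cesK γ p ≤ cesK γ m := by
  rcases le_or_gt 1 γ with hγ₁ | hγ₁
  · rw [min_eq_left hγ₁, one_mul]
    exact cesK_monotone hγ₁ h₁
  rw [min_eq_right hγ₁.le]
  have hp : (0 : ℝ) < p + 1 := by positivity
  set t := (γ - 1) / (p + 1)
  have ht₀ : t ≤ 0 := div_nonpos_of_nonpos_of_nonneg (by linarith) hp.le
  have ht₁ : -1 ≤ t := by rw [le_div_iff₀ hp]; nlinarith
  have hfactor : ∀ i ∈ Ico p m, 1 + t ≤ (γ + i) / (i + 1) := fun i hi => by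
    have hi : (p : ℝ) ≤ i := by exact_mod_cast (mem_Ico.mp hi).1
    rw [show (γ + i) / (i + 1) = 1 + (γ - 1) / (i + 1) by field_simp; ring]
    gcongr 1 + ?_
    rw [div_le_div_iff₀ hp (by positivity)]
    nlinarith
  have hbernoulli : γ ≤ (1 + t) ^ p := by
    have : 1 + p * t - γ = (1 - γ) / (p + 1) := by simp only [t]; field_simp; ring
    have : 0 ≤ (1 - γ) / (p + 1) := div_nonneg (by linarith) hp.le
    linarith [one_add_mul_le_pow (by linarith : -2 ≤ t) p]
  have := (cesK_pos hγ p).le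
  calc γ * cesK γ p ≤ (1 + t) ^ (m - p) * cesK γ p := by
        gcongr
        exact hbernoulli.trans (pow_le_pow_of_le_one (by linarith) (by linarith) (by omega))
    _ ≤ cesK γ m := by
        rw [cesK_eq_mul_prod_Ico hγ h₁, mul_comm, ← Nat.card_Ico, ← prod_const]
        gcongr with i hi
        · exact fun _ _ => by linarith
        · exact hfactor i hi

lemma cesK_mul_one_add_mul_sum_le {β : ℝ} (hβ : 0 < β) (h : β ≤ γ) (p : ℕ) :
    cesK β p * (1 + (γ - β) / (1 + β) * ∑ i ∈ range p, 1 / ((i : ℝ) + 1)) ≤ cesK γ p := by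
  have hratio : cesK γ p = cesK β p * ∏ i ∈ range p, (1 + (γ - β) / (β + i)) := by
    rw [cesK_eq_prod hβ, cesK_eq_prod (hβ.trans_le h), ← prod_mul_distrib]
    refine prod_congr rfl fun i _ => ?_
    field_simp
    ring
  have hterm : ∀ i ∈ range p, (γ - β) / (1 + β) * (1 / ((i : ℝ) + 1)) ≤ (γ - β) / (β + i) :=
    fun i _ => by
      rw [div_mul_div_comm, mul_one]
      gcongr
      nlinarith [(Nat.cast_nonneg i : (0 : ℝ) ≤ i)]
  rw [hratio, mul_sum]
  gcongr
  · exact (cesK_pos hβ p).le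
  refine le_trans ?_ (one_add_sum_le_prod_one_add _ fun i _ => ?_)
  · gcongr with i hi
    exact hterm i hi
  · exact div_nonneg (by linarith) (by positivity)

end CesaroKernel

open Filter

section OmegaLoc

variable {α β : ℝ}

lemma min_one_mul_cesK_mul_cesK_add_one_le_sum (hα : 0 < α) (hβ : 0 < β) (p : ℕ) :
    min 1 β * cesK β p * cesK (α + 1) p ≤
      ∑ n ∈ range (p + 1), cesK α n * cesK β (p + p - n) := by
  rw [← sum_range_cesK hα, mul_sum]
  refine sum_le_sum fun n hn => ?_
  have hn : n ≤ p := Nat.lt_succ_iff.mp (mem_range.mp hn)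
  rw [mul_comm]
  exact mul_le_mul_of_nonneg_left (min_one_mul_cesK_le hβ (by omega) (by omega))
    (cesK_pos hα n).le

theorem not_omegaLocC_cesK_of_lt (hα : 0 < α) (hβ : 0 < β) (h : β < α + 1) (c : ℝ) :
    ¬ omegaLocC α (cesK β) c := by
  intro hω
  set δ := (α + 1 - β) / (1 + β)
  have hδ : 0 < δ := div_pos (by linarith) (by linarith)
  have hbound : ∀ p, 1 ≤ p → min 1 β * (1 + δ * ∑ i ∈ range p, 1 / ((i : ℝ) + 1)) ≤ c := by
    intro p hp
    have hK := cesK_pos hβ p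
    have htail : 0 ≤ ∑ n ∈ Icc (p + 1) (p + p), cesK α n * cesK β (p + p - n) :=
      sum_nonneg fun n _ => (mul_pos (cesK_pos hα n) (cesK_pos hβ _)).le
    refine le_of_mul_le_mul_right ?_ (mul_pos hK hK)
    calc min 1 β * (1 + δ * ∑ i ∈ range p, 1 / ((i : ℝ) + 1)) * (cesK β p * cesK β p)
        = min 1 β * cesK β p * (cesK β p * (1 + δ * ∑ i ∈ range p, 1 / ((i : ℝ) + 1))) := by
          ring
      _ ≤ min 1 β * cesK β p * cesK (α + 1) p := by
          gcongr
          exact cesK_mul_one_add_mul_sum_le hβ h.le p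
      _ ≤ c * (cesK β p * cesK β p) := by
          linarith [min_one_mul_cesK_mul_cesK_add_one_le_sum hα hβ p, hω p p hp le_rfl]
  have htend : Tendsto (fun p : ℕ => min 1 β * (1 + δ * ∑ i ∈ range p, 1 / ((i : ℝ) + 1)))
      atTop atTop :=
    (tendsto_atTop_add_const_left _ 1
      (Real.tendsto_sum_range_one_div_nat_succ_atTop.const_mul_atTop hδ)).const_mul_atTop
      (lt_min one_pos hβ)
  obtain ⟨p, hpc, hp⟩ := ((htend.eventually_gt_atTop c).and (eventually_ge_atTop 1)).exists
  exact (hbound p hp).not_gt hpc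

lemma sum_range_cesK_mul_cesK_le (hα : 0 < α) (hβ : 0 < β) {j p : ℕ} (hjp : j ≤ p) :
    ∑ n ∈ range (j + 1), cesK α n * cesK β (j + p - n) ≤ cesK (α + 1) j * (exp β * cesK β p) := by
  rw [← sum_range_cesK hα, sum_mul]
  refine sum_le_sum fun n hn => ?_
  have hn : n ≤ j := Nat.lt_succ_iff.mp (mem_range.mp hn)
  exact mul_le_mul_of_nonneg_left (cesK_le_exp_mul hβ (by omega) (by omega)) (cesK_pos hα n).le

lemma sum_Icc_cesK_mul_cesK_le (hα : 0 < α) (hβ : 1 ≤ β) {j p : ℕ} (hjp : j ≤ p) :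
    ∑ n ∈ Icc (p + 1) (j + p), cesK α n * cesK β (j + p - n) ≤
      j * (exp α * cesK α p * cesK β j) := by
  have hterm : ∀ n ∈ Icc (p + 1) (j + p),
      cesK α n * cesK β (j + p - n) ≤ exp α * cesK α p * cesK β j := fun n hn => by
    have hn := mem_Icc.mp hn
    exact mul_le_mul (cesK_le_exp_mul hα (by omega) (by omega)) (cesK_monotone hβ (by omega))
      (cesK_pos (by linarith) _).le (mul_pos (exp_pos α) (cesK_pos hα p)).le
  calc _ ≤ #(Icc (p + 1) (j + p)) • (exp α * cesK α p * cesK β j) := sum_le_card_nsmul _ _ _ hterm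
    _ = j * (exp α * cesK α p * cesK β j) := by simp

theorem omegaLocC_cesK_of_le (hα : 0 < α) (h : α + 1 ≤ β) :
    omegaLocC α (cesK β) (exp β + α * exp α) := by
  intro j p _ hjp
  have hβ₁ : 1 ≤ β := by linarith
  have hβ : 0 < β := by linarith
  have hhead := sum_range_cesK_mul_cesK_le hα hβ hjp
  have htail := sum_Icc_cesK_mul_cesK_le hα hβ₁ hjp
  have hj : (j : ℝ) * cesK α p ≤ α * cesK β p := calc
    (j : ℝ) * cesK α p ≤ (α + p) * cesK α p := by
        gcongr
        · exact (cesK_pos hα p).le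
        · linarith [(Nat.cast_le.mpr hjp : (j : ℝ) ≤ p)]
    _ = α * cesK (α + 1) p := (mul_cesK_add_one hα p).symm
    _ ≤ α * cesK β p := by gcongr; exact cesK_le_cesK_of_le (by linarith) h p
  have hKj := cesK_pos hβ j
  have hKp := cesK_pos hβ p
  calc _ ≤ cesK (α + 1) j * (exp β * cesK β p) + j * (exp α * cesK α p * cesK β j) :=
        add_le_add hhead htail
    _ = cesK (α + 1) j * (exp β * cesK β p) + exp α * cesK β j * (j * cesK α p) := by ring
    _ ≤ cesK β j * (exp β * cesK β p) + exp α * cesK β j * (α * cesK β p) := by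
        gcongr
        exact cesK_le_cesK_of_le (by linarith) h j
    _ = (exp β + α * exp α) * (cesK β j * cesK β p) := by ring

end OmegaLoc

theorem stmt10 (α β : ℝ) (hα : 0 < α) (hβ : 0 < β) :
    (∃ c : ℝ, 0 < c ∧ omegaLocC α (cesK β) c) ↔ α + 1 ≤ β := by
  constructor
  · rintro ⟨c, -, hω⟩
    by_contra! h
    exact not_omegaLocC_cesK_of_lt hα hβ h c hω
  · intro h
    exact ⟨exp β + α * exp α, by positivity, omegaLocC_cesK_of_le hα h⟩
end
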